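/- arXiv:1103.3854 — 8 statements merged into one kernel-verified Lean document; each statement's English description precedes it below -/
import Mathlib

section
/- Let G = (V,E) be a graph, X, Y ⊆ V, y ∈ Y, and p ∈ [0,1]^V. Define DRel(G, X, Y, p) as the probability that, when vertices in Y fail independently with probability 1 - p_y, every vertex of X is in the closed neighbourhood of some operating vertex of Y. If X ⊆ N_G[Y] and X ≠ ∅, then DRel(G, X, Y, p) = p_y · DRel(G, X \ N_G[y], Y \ {y}, p) + (1 - p_y) · DRel(G, X, Y \ {y}, p). -/
open scoped Classical
open Finset

/-- The closed neighbourhood of a finite set of vertices `J` in `G`. -/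
noncomputable def closedNbhd {V : Type*} [Fintype V] (G : SimpleGraph V) (J : Finset V) :
    Finset V :=
  Finset.univ.filter (fun v => v ∈ J ∨ ∃ j ∈ J, G.Adj j v)

/-- `X` is a dominating set of `G`. -/
def IsDominating {V : Type*} (G : SimpleGraph V) (X : Finset V) : Prop :=
  ∀ v, v ∈ X ∨ ∃ x ∈ X, G.Adj x v

/-- Domination reliability: probability that the random set of operating vertices
(vertex `v` operating independently with probability `p v`) is a dominating set. -/
noncomputable def DRel {V : Type*} [Fintype V] (G : SimpleGraph V) (p : V → ℝ) : ℝ :=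
  ∑ X ∈ Finset.univ.filter (fun X : Finset V => IsDominating G X),
    (∏ v ∈ X, p v) * ∏ v ∈ Xᶜ, (1 - p v)

/-- Generalized domination reliability `DRel(G, X, Y, p)`: the probability that,
when the vertices of `Y` operate independently with probabilities `p`, every vertex
of `X` lies in the closed neighbourhood of some operating vertex of `Y`. -/
noncomputable def DRelXY {V : Type*} [Fintype V] (G : SimpleGraph V) (X Y : Finset V)
    (p : V → ℝ) : ℝ :=
  ∑ S ∈ Y.powerset.filter (fun S => ∀ x ∈ X, x ∈ closedNbhd G S),
    (∏ v ∈ S, p v) * ∏ v ∈ Y \ S, (1 - p v)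

lemma mem_closedNbhd_insert {V : Type*} [Fintype V] (G : SimpleGraph V) (y x : V)
    (t : Finset V) :
    x ∈ closedNbhd G (insert y t) ↔ x ∈ closedNbhd G {y} ∨ x ∈ closedNbhd G t := by
  simp only [closedNbhd, mem_filter, mem_univ, true_and, mem_insert, mem_singleton]
  constructor
  · rintro (h | ⟨j, hj, hadj⟩)
    · rcases h with h | h
      · exact Or.inl (Or.inl h)
      · exact Or.inr (Or.inl h)
    · rcases hj with rfl | hj
      · exact Or.inl (Or.inr ⟨j, rfl, hadj⟩)
      · exact Or.inr (Or.inr ⟨j, hj, hadj⟩)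
  · rintro ((h | ⟨j, rfl, hadj⟩) | (h | ⟨j, hj, hadj⟩))
    · exact Or.inl (Or.inl h)
    · exact Or.inr ⟨j, Or.inl rfl, hadj⟩
    · exact Or.inl (Or.inr h)
    · exact Or.inr ⟨j, Or.inr hj, hadj⟩

theorem drelXY_recurrence {V : Type*} [Fintype V] (G : SimpleGraph V)
    (X Y : Finset V) (y : V) (p : V → ℝ)
    (hp : ∀ v, p v ∈ Set.Icc (0 : ℝ) 1)
    (hy : y ∈ Y) (hX : X ⊆ closedNbhd G Y) (hXne : X ≠ ∅) :
    DRelXY G X Y p =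
      p y * DRelXY G (X \ closedNbhd G {y}) (Y.erase y) p
        + (1 - p y) * DRelXY G X (Y.erase y) p := by
  have hyE : y ∉ Y.erase y := notMem_erase y Y
  have hins : insert y (Y.erase y) = Y := insert_erase hy
  unfold DRelXY
  rw [Finset.sum_filter, Finset.sum_filter, Finset.sum_filter, ← hins,
    Finset.sum_powerset_insert hyE]
  rw [Finset.mul_sum, Finset.mul_sum]
  rw [add_comm]
  simp only [Finset.erase_insert hyE]
  congr 1
  · -- terms with y added
    apply Finset.sum_congr rfl
    intro t ht
    rw [mem_powerset] at ht
    have hyt : y ∉ t := fun h => hyE (ht h)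
    have hcond : (∀ x ∈ X, x ∈ closedNbhd G (insert y t)) ↔
        (∀ x ∈ X \ closedNbhd G {y}, x ∈ closedNbhd G t) := by
      constructor
      · intro h x hx
        rw [mem_sdiff] at hx
        rcases (mem_closedNbhd_insert G y x t).mp (h x hx.1) with h' | h'
        · exact absurd h' hx.2
        · exact h'
      · intro h x hx
        rw [mem_closedNbhd_insert]
        by_cases hxy : x ∈ closedNbhd G {y}
        · exact Or.inl hxy
        · exact Or.inr (h x (mem_sdiff.mpr ⟨hx, hxy⟩))
    simp only [hcond]
    by_cases hc : ∀ x ∈ X \ closedNbhd G {y}, x ∈ closedNbhd G t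
    · rw [if_pos hc, if_pos hc]
      have h1 : ∏ v ∈ insert y t, p v = p y * ∏ v ∈ t, p v :=
        Finset.prod_insert hyt
      have h2 : insert y (Y.erase y) \ insert y t = Y.erase y \ t := by
        ext v
        simp only [mem_sdiff, mem_insert]
        constructor
        · rintro ⟨(rfl | hv), hnv⟩
          · exact absurd (Or.inl rfl) hnv
          · exact ⟨hv, fun h => hnv (Or.inr h)⟩
        · rintro ⟨hv, hnv⟩
          exact ⟨Or.inr hv, fun h => by
            rcases h with rfl | h
            · exact hyE hv
            · exact hnv h⟩
      rw [h1, h2]; ring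
    · rw [if_neg hc, if_neg hc, mul_zero]
  · -- terms without y
    apply Finset.sum_congr rfl
    intro t ht
    rw [mem_powerset] at ht
    have hyt : y ∉ t := fun h => hyE (ht h)
    by_cases hc : ∀ x ∈ X, x ∈ closedNbhd G t
    · rw [if_pos hc, if_pos hc]
      have h2 : insert y (Y.erase y) \ t = insert y (Y.erase y \ t) := by
        rw [insert_sdiff_of_notMem _ hyt]
      have h3 : y ∉ Y.erase y \ t := fun h => hyE (mem_sdiff.mp h).1
      rw [h2, Finset.prod_insert h3]; ring
    · rw [if_neg hc, if_neg hc, mul_zero]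
end

section
/- For any graph G = (V,E) whose vertices fail independently with probabilities q_v = 1 - p_v, the domination reliability satisfies the inclusion-exclusion expansion DRel(G, p) = Σ_{J ⊆ V} (-1)^{|J|} ∏_{v ∈ N_G[J]} q_v. -/
open scoped Classical
open Finset

/-- The set of vertices NOT dominated by `X`. -/
noncomputable def badSet {V : Type*} [Fintype V] (G : SimpleGraph V) (X : Finset V) :
    Finset V :=
  Finset.univ.filter (fun v => ¬ (v ∈ X ∨ ∃ x ∈ X, G.Adj x v))

lemma sum_powerset_neg_one_pow_card_real {α : Type*} [DecidableEq α] (x : Finset α) :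
    (∑ m ∈ x.powerset, (-1 : ℝ) ^ m.card) = if x = ∅ then 1 else 0 := by
  have h := Finset.sum_powerset_neg_one_pow_card (x := x)
  have := congrArg (fun z : ℤ => (z : ℝ)) h
  push_cast at this
  simpa [apply_ite (fun z : ℤ => (z : ℝ))] using this

lemma powerset_eq_filter {α : Type*} [Fintype α] [DecidableEq α] (s : Finset α) :
    s.powerset = Finset.univ.filter (· ⊆ s) := by
  ext t; simp

theorem drel_inclusion_exclusion {V : Type*} [Fintype V] (G : SimpleGraph V)
    (p : V → ℝ) (hp : ∀ v, p v ∈ Set.Icc (0 : ℝ) 1) :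
    DRel G p = ∑ J : Finset V, (-1 : ℝ) ^ J.card * ∏ v ∈ closedNbhd G J, (1 - p v) := by
  classical
  -- expansion of a product of failure probabilities as a sum over subsets
  have key : ∀ S : Finset V, ∏ v ∈ S, (1 - p v)
      = ∑ X ∈ Sᶜ.powerset, (∏ v ∈ X, p v) * ∏ v ∈ Xᶜ, (1 - p v) := by
    intro S
    have h1 : ∀ X ∈ Sᶜ.powerset, (∏ v ∈ X, p v) * ∏ v ∈ Xᶜ, (1 - p v)
        = ((∏ v ∈ X, p v) * ∏ v ∈ Sᶜ \ X, (1 - p v)) * ∏ v ∈ S, (1 - p v) := by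
      intro X hX
      rw [mem_powerset] at hX
      have hXc : Xᶜ = (Sᶜ \ X) ∪ S := by
        ext v
        simp only [Finset.mem_compl, Finset.mem_sdiff, Finset.mem_union]
        constructor
        · intro hv
          by_cases h : v ∈ S
          · exact Or.inr h
          · exact Or.inl ⟨by simpa using h, hv⟩
        · rintro (⟨hv, hv2⟩ | hv)
          · exact hv2
          · intro hvX
            exact (Finset.mem_compl.mp (hX hvX)) hv
      have hdisj : Disjoint (Sᶜ \ X) S := by
        refine Finset.disjoint_left.mpr ?_
        intro a ha haS
        exact (Finset.mem_compl.mp (Finset.mem_sdiff.mp ha).1) haS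
      rw [hXc, Finset.prod_union hdisj, mul_assoc]
    rw [Finset.sum_congr rfl h1, ← Finset.sum_mul]
    have : ∑ X ∈ Sᶜ.powerset, (∏ v ∈ X, p v) * ∏ v ∈ Sᶜ \ X, (1 - p v)
        = ∏ v ∈ Sᶜ, (p v + (1 - p v)) := (Finset.prod_add _ _ _).symm
    rw [this]
    simp
  -- rewrite RHS
  have hcond : ∀ (J X : Finset V), X ⊆ (closedNbhd G J)ᶜ ↔ J ⊆ badSet G X := by
    intro J X
    constructor
    · intro h j hj
      simp only [badSet, Finset.mem_filter, Finset.mem_univ, true_and]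
      push_neg
      constructor
      · intro hjX
        have := Finset.mem_compl.mp (h hjX)
        simp only [closedNbhd, Finset.mem_filter, Finset.mem_univ, true_and] at this
        exact this (Or.inl hj)
      · intro x hx hadj
        have := Finset.mem_compl.mp (h hx)
        simp only [closedNbhd, Finset.mem_filter, Finset.mem_univ, true_and] at this
        exact this (Or.inr ⟨j, hj, hadj.symm⟩)
    · intro h x hx
      rw [Finset.mem_compl]
      simp only [closedNbhd, Finset.mem_filter, Finset.mem_univ, true_and]
      rintro (hxJ | ⟨j, hj, hadj⟩)
      · have := h hxJ
        simp only [badSet, Finset.mem_filter, Finset.mem_univ, true_and] at this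
        exact this (Or.inl hx)
      · have := h hj
        simp only [badSet, Finset.mem_filter, Finset.mem_univ, true_and] at this
        exact this (Or.inr ⟨x, hx, hadj.symm⟩)
  have hbad : ∀ X : Finset V, badSet G X = ∅ ↔ IsDominating G X := by
    intro X
    simp only [badSet, Finset.filter_eq_empty_iff, Finset.mem_univ, true_implies,
      not_not, IsDominating]
  calc
    DRel G p
        = ∑ X : Finset V, (if IsDominating G X then
            (∏ v ∈ X, p v) * ∏ v ∈ Xᶜ, (1 - p v) else 0) := by
          rw [DRel, Finset.sum_filter]
    _ = ∑ X : Finset V, (if badSet G X = ∅ then (1:ℝ) else 0)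
          * ((∏ v ∈ X, p v) * ∏ v ∈ Xᶜ, (1 - p v)) := by
          refine Finset.sum_congr rfl fun X _ => ?_
          by_cases h : IsDominating G X
          · rw [if_pos h, if_pos ((hbad X).mpr h), one_mul]
          · rw [if_neg h, if_neg (fun he => h ((hbad X).mp he)), zero_mul]
    _ = ∑ X : Finset V, (∑ J ∈ (badSet G X).powerset, (-1 : ℝ) ^ J.card)
          * ((∏ v ∈ X, p v) * ∏ v ∈ Xᶜ, (1 - p v)) := by
          refine Finset.sum_congr rfl fun X _ => ?_
          rw [sum_powerset_neg_one_pow_card_real]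
    _ = ∑ X : Finset V, ∑ J : Finset V,
          (if J ⊆ badSet G X then (-1 : ℝ) ^ J.card
            * ((∏ v ∈ X, p v) * ∏ v ∈ Xᶜ, (1 - p v)) else 0) := by
          refine Finset.sum_congr rfl fun X _ => ?_
          rw [Finset.sum_mul, powerset_eq_filter, Finset.sum_filter]
    _ = ∑ J : Finset V, ∑ X : Finset V,
          (if X ⊆ (closedNbhd G J)ᶜ then (-1 : ℝ) ^ J.card
            * ((∏ v ∈ X, p v) * ∏ v ∈ Xᶜ, (1 - p v)) else 0) := by
          rw [Finset.sum_comm]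
          refine Finset.sum_congr rfl fun J _ => Finset.sum_congr rfl fun X _ => ?_
          by_cases h : J ⊆ badSet G X
          · rw [if_pos h, if_pos ((hcond J X).mpr h)]
          · rw [if_neg h, if_neg (fun hc => h ((hcond J X).mp hc))]
    _ = ∑ J : Finset V, (-1 : ℝ) ^ J.card * ∏ v ∈ closedNbhd G J, (1 - p v) := by
          refine Finset.sum_congr rfl fun J _ => ?_
          rw [key, Finset.mul_sum, ← Finset.sum_filter]
          refine Finset.sum_congr ?_ fun X _ => rfl
          ext X
          simp [Finset.mem_powerset]
end

section
/- Let G = (V,E) be a graph without isolated vertices, with V linearly ordered. Call N_G[v] \ {v} a broken neighbourhood if v = max N_G[v]. Then for any set 𝒳 of broken neighbourhoods of G, DRel(G, p) = Σ (-1)^{|J|} ∏_{v∈N_G[J]} q_v, where the sum is over all J ⊆ V not containing any member of 𝒳 as a subset. -/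
open scoped Classical
open Finset

/-- `X` is a broken neighbourhood of `G` (w.r.t. the linear order on the vertices):
`X = N_G[v] \ {v}` for some vertex `v` which is the maximum of its closed neighbourhood. -/
def IsBrokenNbhd {V : Type*} [Fintype V] [LinearOrder V] (G : SimpleGraph V)
    (X : Finset V) : Prop :=
  ∃ v : V, X = closedNbhd G {v} \ {v} ∧ ∀ w ∈ closedNbhd G {v}, w ≤ v

/-!
`N[X]ᶜ` is the set of vertices not dominated by `X`, and `J ⊆ N[X]ᶜ ↔ X ⊆ N[J]ᶜ`. Writing the
indicator of `N[X]ᶜ = ∅` as `∑_{J ⊆ N[X]ᶜ} (-1)^|J|` and summing over the operating set `X` gives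
`DRel G p = ∑_J (-1)^|J| ∏_{v ∈ N[J]} q_v` over all `J ⊆ V`.

If `v` is not isolated and `N(v) ⊆ K`, then `N[K ∪ {v}] = N[K]`, so among the sets `J ⊇ N(v)` the
terms of `J` and `J △ {v}` cancel. Hence the broken neighbourhoods `N(v)` of `𝒳` can be removed from
the constraint one at a time, in decreasing order of `v`: as `w = max N[w]`, the vertex `v` lies in
no broken neighbourhood `N(w)` with `w ≤ v`, so toggling `v` respects the remaining constraints.
-/

theorem sum_filter_eq_zero_of_insert_eq_neg {α R : Type*} [Fintype α] [DecidableEq α]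
    [AddCommGroup R] {P : Finset α → Prop} [DecidablePred P]
    {f : Finset α → R} (a : α) (hP : ∀ J, a ∉ J → (P (insert a J) ↔ P J))
    (hf : ∀ J, a ∉ J → P J → f (insert a J) = -f J) :
    ∑ J ∈ univ.filter P, f J = 0 := by
  have hP_erase : ∀ J, a ∈ J → (P J ↔ P (J.erase a)) := fun J ha => by
    simpa only [insert_erase ha] using hP (J.erase a) (notMem_erase a J)
  refine sum_involution (fun J _ => if a ∈ J then J.erase a else insert a J) ?_ ?_ ?_ ?_
  · intro J hJ
    rw [mem_filter] at hJ
    split_ifs with ha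
    · have h := hf _ (notMem_erase a J) ((hP_erase J ha).1 hJ.2)
      rw [insert_erase ha] at h
      rw [h, neg_add_cancel]
    · rw [hf J ha hJ.2, add_neg_cancel]
  · intro J _ _
    split_ifs with ha
    · exact fun h => (erase_eq_self.1 h) ha
    · exact fun h => ha (insert_eq_self.1 h)
  · intro J hJ
    simp only [mem_filter, mem_univ, true_and] at hJ ⊢
    split_ifs with ha
    · exact (hP_erase J ha).1 hJ
    · exact (hP J ha).2 hJ
  · intro J _
    by_cases ha : a ∈ J
    · simp only [if_pos ha, notMem_erase, if_false, insert_erase ha]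
    · simp only [if_neg ha, mem_insert_self, if_true, erase_insert ha]

theorem sum_powerset_compl_prod_mul_prod_one_sub {α R : Type*} [Fintype α] [DecidableEq α]
    [CommRing R] (T : Finset α) (p : α → R) :
    ∑ X ∈ Tᶜ.powerset, (∏ v ∈ X, p v) * ∏ v ∈ Xᶜ, (1 - p v) = ∏ v ∈ T, (1 - p v) := by
  have hsplit : ∀ X ∈ Tᶜ.powerset, (∏ v ∈ X, p v) * ∏ v ∈ Xᶜ, (1 - p v)
      = (∏ v ∈ T, (1 - p v)) * ((∏ v ∈ X, p v) * ∏ v ∈ Tᶜ \ X, (1 - p v)) := by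
    intro X hX
    rw [mem_powerset] at hX
    have hXc : Xᶜ = T ∪ (Tᶜ \ X) := by
      ext u
      have := @hX u
      simp only [mem_compl, mem_union, mem_sdiff] at this ⊢
      tauto
    rw [hXc, prod_union (disjoint_compl_right.mono_right sdiff_subset)]
    ring
  rw [sum_congr rfl hsplit, ← mul_sum, ← prod_add]
  simp only [add_sub_cancel, prod_const_one, mul_one]

section Graph

variable {V : Type*} [Fintype V] (G : SimpleGraph V)

theorem mem_closedNbhd {J : Finset V} {u : V} :
    u ∈ closedNbhd G J ↔ u ∈ J ∨ ∃ j ∈ J, G.Adj j u := by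
  simp [closedNbhd]

theorem closedNbhd_singleton_sdiff [DecidableEq V] (v : V) :
    closedNbhd G {v} \ {v} = G.neighborFinset v := by
  ext u
  simp only [mem_sdiff, mem_closedNbhd, mem_singleton, exists_eq_left,
    SimpleGraph.mem_neighborFinset]
  constructor
  · rintro ⟨rfl | h, hne⟩
    · exact absurd rfl hne
    · exact h
  · exact fun h => ⟨Or.inr h, (G.ne_of_adj h).symm⟩

theorem isBrokenNbhd_iff [LinearOrder V] {X : Finset V} :
    IsBrokenNbhd G X ↔ ∃ v, X = G.neighborFinset v ∧ ∀ u, G.Adj v u → u ≤ v := by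
  refine exists_congr fun v => ?_
  rw [closedNbhd_singleton_sdiff]
  refine and_congr_right fun _ => ?_
  simp only [mem_closedNbhd, mem_singleton, exists_eq_left]
  exact ⟨fun h u hu => h u (Or.inr hu), fun h w hw => hw.elim (fun e => e ▸ le_rfl) (h w)⟩

theorem isDominating_iff_closedNbhd_eq_univ {X : Finset V} :
    IsDominating G X ↔ closedNbhd G X = univ := by
  simp [IsDominating, eq_univ_iff_forall, mem_closedNbhd]

theorem disjoint_closedNbhd_comm {J X : Finset V} :
    Disjoint J (closedNbhd G X) ↔ Disjoint X (closedNbhd G J) := by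
  simp only [disjoint_left, mem_closedNbhd, not_or, not_exists, not_and]
  constructor <;> intro h x hx <;>
    exact ⟨fun hx' => (h hx').1 hx, fun j hj hadj => (h hj).2 x hx hadj.symm⟩

theorem closedNbhd_insert_of_neighborFinset_subset [DecidableEq V] {v : V} {K : Finset V}
    (hv : ∃ w, G.Adj v w) (hK : G.neighborFinset v ⊆ K) :
    closedNbhd G (insert v K) = closedNbhd G K := by
  obtain ⟨w, hw⟩ := hv
  have hnbr : ∀ u, G.Adj v u → u ∈ K := fun u hu => hK ((G.mem_neighborFinset v u).2 hu)
  ext u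
  simp only [mem_closedNbhd, mem_insert]
  constructor
  · rintro ((rfl | hu) | ⟨j, rfl | hj, hadj⟩)
    · exact Or.inr ⟨w, hnbr w hw, hw.symm⟩
    · exact Or.inl hu
    · exact Or.inl (hnbr u hadj)
    · exact Or.inr ⟨j, hj, hadj⟩
  · rintro (hu | ⟨j, hj, hadj⟩)
    · exact Or.inl (Or.inr hu)
    · exact Or.inr ⟨j, Or.inr hj, hadj⟩

theorem drel_eq_alternating_sum (p : V → ℝ) :
    DRel G p = ∑ J : Finset V, (-1 : ℝ) ^ #J * ∏ v ∈ closedNbhd G J, (1 - p v) := by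
  have hsign : ∀ s : Finset V, ∑ J ∈ s.powerset, (-1 : ℝ) ^ #J = if s = ∅ then 1 else 0 := by
    intro s
    exact_mod_cast sum_powerset_neg_one_pow_card (x := s)
  calc DRel G p
      = ∑ X : Finset V, (if (closedNbhd G X)ᶜ = ∅ then 1 else 0) *
          ((∏ v ∈ X, p v) * ∏ v ∈ Xᶜ, (1 - p v)) := by
        simp only [DRel, sum_filter, ite_mul, one_mul, zero_mul, compl_eq_empty_iff,
          isDominating_iff_closedNbhd_eq_univ]
    _ = ∑ X : Finset V, ∑ J ∈ (closedNbhd G X)ᶜ.powerset,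
          (-1 : ℝ) ^ #J * ((∏ v ∈ X, p v) * ∏ v ∈ Xᶜ, (1 - p v)) := by
        simp only [← hsign, sum_mul]
    _ = ∑ J : Finset V, ∑ X ∈ (closedNbhd G J)ᶜ.powerset,
          (-1 : ℝ) ^ #J * ((∏ v ∈ X, p v) * ∏ v ∈ Xᶜ, (1 - p v)) := by
        refine sum_comm' fun X J => ?_
        simp only [mem_univ, true_and, and_true, mem_powerset, subset_compl_iff_disjoint_right,
          disjoint_closedNbhd_comm]
    _ = ∑ J : Finset V, (-1 : ℝ) ^ #J * ∏ v ∈ closedNbhd G J, (1 - p v) := by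
        simp only [← mul_sum, sum_powerset_compl_prod_mul_prod_one_sub]

theorem sum_filter_not_neighborFinset_subset [LinearOrder V] {R : Type*} [CommRing R]
    (g : Finset V → R) (W : Finset V)
    (hW : ∀ w ∈ W, (∃ u, G.Adj w u) ∧ ∀ u, G.Adj w u → u ≤ w) :
    ∑ J ∈ univ.filter (fun J => ∀ w ∈ W, ¬ G.neighborFinset w ⊆ J),
        (-1 : R) ^ #J * g (closedNbhd G J)
      = ∑ J : Finset V, (-1 : R) ^ #J * g (closedNbhd G J) := by
  induction W using induction_on_max with
  | empty => simp
  | insert a s hlt ih =>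
    obtain ⟨ha, hs⟩ := forall_mem_insert _ _ _ |>.1 hW
    have hsub : ∀ w ∈ insert a s, ∀ J,
        G.neighborFinset w ⊆ insert a J ↔ G.neighborFinset w ⊆ J := by
      intro w hw J
      refine subset_insert_iff_of_notMem fun haw => ?_
      rw [SimpleGraph.mem_neighborFinset] at haw
      rcases mem_insert.1 hw with rfl | hws
      · exact G.irrefl haw
      · exact (hlt w hws).not_ge ((hs w hws).2 a haw)
    have hcancel : ∑ J ∈ univ.filter (fun J => (∀ w ∈ s, ¬ G.neighborFinset w ⊆ J) ∧
        G.neighborFinset a ⊆ J), (-1 : R) ^ #J * g (closedNbhd G J) = 0 := by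
      refine sum_filter_eq_zero_of_insert_eq_neg a (fun J _ => ?_) (fun J haJ hJ => ?_)
      · rw [hsub a (mem_insert_self a s)]
        exact and_congr_left' <|
          forall₂_congr fun w hw => not_congr (hsub w (mem_insert_of_mem hw) J)
      · rw [card_insert_of_notMem haJ, closedNbhd_insert_of_neighborFinset_subset G ha.1 hJ.2,
          pow_succ]
        ring
    rw [← ih hs, ← sum_filter_add_sum_filter_not (univ.filter fun J => ∀ w ∈ s,
      ¬ G.neighborFinset w ⊆ J) (G.neighborFinset a ⊆ ·), filter_filter, hcancel, zero_add,
      filter_filter]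
    refine sum_congr (filter_congr fun J _ => ?_) fun _ _ => rfl
    rw [forall_mem_insert, and_comm]

end Graph

theorem drel_broken_nbhd_general {V : Type*} [Fintype V] [LinearOrder V] (G : SimpleGraph V)
    (p : V → ℝ)
    (hiso : ∀ v : V, ∃ w, G.Adj v w)
    (𝒳 : Set (Finset V)) (h𝒳 : ∀ X ∈ 𝒳, IsBrokenNbhd G X) :
    DRel G p =
      ∑ J ∈ Finset.univ.filter (fun J : Finset V => ∀ X ∈ 𝒳, ¬ X ⊆ J),
        (-1 : ℝ) ^ J.card * ∏ v ∈ closedNbhd G J, (1 - p v) := by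
  set W := univ.filter fun v => G.neighborFinset v ∈ 𝒳 ∧ ∀ u, G.Adj v u → u ≤ v
  have hW : ∀ w ∈ W, (∃ u, G.Adj w u) ∧ ∀ u, G.Adj w u → u ≤ w :=
    fun w hw => ⟨hiso w, (mem_filter.1 hw).2.2⟩
  have hfilter : ∀ J : Finset V, (∀ X ∈ 𝒳, ¬ X ⊆ J) ↔ ∀ w ∈ W, ¬ G.neighborFinset w ⊆ J := by
    refine fun J => ⟨fun h w hw => h _ (mem_filter.1 hw).2.1, fun h X hX => ?_⟩
    obtain ⟨v, rfl, hv⟩ := (isBrokenNbhd_iff G).1 (h𝒳 X hX)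
    exact h v (mem_filter.2 ⟨mem_univ v, hX, hv⟩)
  rw [drel_eq_alternating_sum, filter_congr fun J _ => hfilter J]
  exact (sum_filter_not_neighborFinset_subset G (fun N => ∏ v ∈ N, (1 - p v)) W hW).symm

theorem drel_broken_nbhd {V : Type*} [Fintype V] [LinearOrder V] (G : SimpleGraph V)
    (p : V → ℝ) (hp : ∀ v, p v ∈ Set.Icc (0 : ℝ) 1)
    (hiso : ∀ v : V, ∃ w, G.Adj v w)
    (𝒳 : Set (Finset V)) (h𝒳 : ∀ X ∈ 𝒳, IsBrokenNbhd G X) :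
    DRel G p =
      ∑ J ∈ Finset.univ.filter (fun J : Finset V => ∀ X ∈ 𝒳, ¬ X ⊆ J),
        (-1 : ℝ) ^ J.card * ∏ v ∈ closedNbhd G J, (1 - p v) :=
  drel_broken_nbhd_general G p hiso 𝒳 h𝒳
end

section
/- Let G = (V,E) be a graph with no isolated vertices and no isolated edges, and let A be any set of vertices of G each of which is adjacent to a vertex of degree 1. Then DRel(G, p) = Σ_{J ⊆ V \ A} (-1)^{|J|} ∏_{v∈N_G[J]} q_v. -/
open scoped Classical
open Finset

/-- Summing the basic weights over subsets of `S` gives the probability that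
all vertices outside `S` fail. -/
lemma sum_powerset_weight {V : Type*} [Fintype V] (p : V → ℝ) (S : Finset V) :
    ∑ X ∈ S.powerset, (∏ v ∈ X, p v) * ∏ v ∈ Xᶜ, (1 - p v)
      = ∏ v ∈ Sᶜ, (1 - p v) := by
  have key : ∀ X ∈ S.powerset,
      (∏ v ∈ X, p v) * ∏ v ∈ Xᶜ, (1 - p v)
        = ((∏ v ∈ X, p v) * ∏ v ∈ S \ X, (1 - p v)) * ∏ v ∈ Sᶜ, (1 - p v) := by
    intro X hX
    rw [mem_powerset] at hX
    have hXc : (Xᶜ : Finset V) = (S \ X) ∪ Sᶜ := by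
      ext v
      simp only [mem_compl, mem_union, mem_sdiff]
      constructor
      · intro hv
        by_cases h : v ∈ S
        · exact Or.inl ⟨h, hv⟩
        · exact Or.inr h
      · rintro (⟨_, hv⟩ | hv)
        · exact hv
        · exact fun hx => hv (hX hx)
    have hdisj : Disjoint (S \ X) (Sᶜ : Finset V) :=
      disjoint_left.2 fun v hv hv' => (mem_compl.1 hv') (mem_sdiff.1 hv).1
    rw [hXc, prod_union hdisj]
    ring
  rw [sum_congr rfl key, ← sum_mul, ← prod_add]
  have h1 : ∀ v ∈ S, p v + (1 - p v) = (1 : ℝ) := fun v _ => by ring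
  rw [prod_congr rfl h1, prod_const_one, one_mul]

/-- Real-valued version of the alternating sum over a powerset. -/
lemma sum_powerset_neg_one_pow_card_real_s7 {V : Type*} (s : Finset V) :
    ∑ J ∈ s.powerset, (-1 : ℝ) ^ J.card = if s = ∅ then 1 else 0 := by
  have h := Finset.sum_powerset_neg_one_pow_card (x := s)
  have h2 : ((∑ m ∈ s.powerset, (-1 : ℤ) ^ m.card : ℤ) : ℝ) = if s = ∅ then 1 else 0 := by
    rw [h]; split <;> simp
  rw [← h2]
  push_cast
  rfl

/-- Inclusion–exclusion for domination reliability over all subsets of vertices. -/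
lemma drel_eq_sum_univ {V : Type*} [Fintype V] (G : SimpleGraph V) [DecidableRel G.Adj]
    (p : V → ℝ) :
    DRel G p = ∑ J ∈ (Finset.univ : Finset V).powerset,
      (-1 : ℝ) ^ J.card * ∏ v ∈ closedNbhd G J, (1 - p v) := by
  classical
  set W : Finset V → ℝ := fun X => (∏ v ∈ X, p v) * ∏ v ∈ Xᶜ, (1 - p v) with hW
  set U : Finset V → Finset V :=
    fun X => Finset.univ.filter (fun v => ¬ (v ∈ X ∨ ∃ x ∈ X, G.Adj x v)) with hU
  have hUmem : ∀ (X : Finset V) (v : V), v ∈ U X ↔ v ∉ X ∧ ∀ x ∈ X, ¬ G.Adj x v := by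
    intro X v; simp [hU, not_or]
  have hCmem : ∀ (J : Finset V) (v : V),
      v ∈ closedNbhd G J ↔ v ∈ J ∨ ∃ j ∈ J, G.Adj j v := by
    intro J v; simp [closedNbhd]
  have hdom : ∀ X : Finset V, IsDominating G X ↔ U X = ∅ := by
    intro X
    simp only [Finset.eq_empty_iff_forall_notMem]
    constructor
    · intro h v hv
      rw [hUmem] at hv
      rcases h v with h1 | ⟨x, hx, ha⟩
      · exact hv.1 h1
      · exact hv.2 x hx ha
    · intro h v
      by_contra hn
      push_neg at hn
      exact h v ((hUmem X v).2 ⟨hn.1, hn.2⟩)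
  have hcond : ∀ (J X : Finset V), J ⊆ U X ↔ X ⊆ (closedNbhd G J)ᶜ := by
    intro J X
    constructor
    · intro h x hx
      rw [mem_compl, hCmem]
      push_neg
      refine ⟨fun hxJ => ((hUmem X x).1 (h hxJ)).1 hx, ?_⟩
      intro j hj hadj
      exact ((hUmem X j).1 (h hj)).2 x hx hadj.symm
    · intro h j hj
      rw [hUmem]
      constructor
      · intro hjX
        exact (mem_compl.1 (h hjX)) ((hCmem J j).2 (Or.inl hj))
      · intro x hx hadj
        exact (mem_compl.1 (h hx)) ((hCmem J x).2 (Or.inr ⟨j, hj, hadj.symm⟩))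
  calc DRel G p = ∑ X ∈ (Finset.univ : Finset (Finset V)),
        (if IsDominating G X then (1 : ℝ) else 0) * W X := by
        rw [DRel, sum_filter]
        exact sum_congr rfl fun X _ => by split <;> simp [hW]
    _ = ∑ X ∈ (Finset.univ : Finset (Finset V)),
        (∑ J ∈ (U X).powerset, (-1 : ℝ) ^ J.card) * W X := by
        refine sum_congr rfl fun X _ => ?_
        rw [sum_powerset_neg_one_pow_card_real_s7]
        congr 1
        simp only [hdom X]
    _ = ∑ X ∈ (Finset.univ : Finset (Finset V)),
        ∑ J ∈ (Finset.univ : Finset V).powerset,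
          (if J ⊆ U X then (-1 : ℝ) ^ J.card * W X else 0) := by
        refine sum_congr rfl fun X _ => ?_
        rw [sum_mul]
        have hps : (U X).powerset
            = (Finset.univ : Finset V).powerset.filter (fun J => J ⊆ U X) := by
          ext J
          simp [Finset.mem_powerset, Finset.mem_filter, Finset.subset_univ]
        rw [hps, sum_filter]
    _ = ∑ J ∈ (Finset.univ : Finset V).powerset,
        ∑ X ∈ (Finset.univ : Finset (Finset V)),
          (if J ⊆ U X then (-1 : ℝ) ^ J.card * W X else 0) := Finset.sum_comm
    _ = ∑ J ∈ (Finset.univ : Finset V).powerset,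
        (-1 : ℝ) ^ J.card * ∏ v ∈ closedNbhd G J, (1 - p v) := by
        refine sum_congr rfl fun J _ => ?_
        have hXset : ∀ X : Finset V, (J ⊆ U X) ↔ X ∈ ((closedNbhd G J)ᶜ).powerset := by
          intro X; rw [mem_powerset]; exact hcond J X
        calc ∑ X ∈ (Finset.univ : Finset (Finset V)),
              (if J ⊆ U X then (-1 : ℝ) ^ J.card * W X else 0)
            = ∑ X ∈ ((closedNbhd G J)ᶜ).powerset, (-1 : ℝ) ^ J.card * W X := by
              rw [← sum_filter]
              refine sum_congr ?_ fun _ _ => rfl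
              ext X
              simp only [mem_filter, mem_univ, true_and]
              exact hXset X
          _ = (-1 : ℝ) ^ J.card * ∑ X ∈ ((closedNbhd G J)ᶜ).powerset, W X := by
              rw [mul_sum]
          _ = (-1 : ℝ) ^ J.card * ∏ v ∈ closedNbhd G J, (1 - p v) := by
              simp only [hW]
              rw [sum_powerset_weight p ((closedNbhd G J)ᶜ), compl_compl]

theorem drel_no_isolated_edges {V : Type*} [Fintype V] (G : SimpleGraph V)
    [DecidableRel G.Adj]
    (hiso : ∀ v : V, ∃ w, G.Adj v w)
    (hedge : ∀ v w : V, G.Adj v w → G.degree v = 1 → G.degree w ≠ 1)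
    (A : Finset V) (hA : ∀ a ∈ A, ∃ v, G.Adj a v ∧ G.degree v = 1)
    (p : V → ℝ) (hp : ∀ v, p v ∈ Set.Icc (0 : ℝ) 1) :
    DRel G p = ∑ J ∈ Aᶜ.powerset, (-1 : ℝ) ^ J.card * ∏ v ∈ closedNbhd G J, (1 - p v) := by
  classical
  letI : LinearOrder V := LinearOrder.lift' (Fintype.equivFin V) (Equiv.injective _)
  set f : Finset V → ℝ :=
    fun J => (-1 : ℝ) ^ J.card * ∏ v ∈ closedNbhd G J, (1 - p v) with hf
  -- choice of a degree-one neighbour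
  set vd : V → V := fun a =>
    if h : ∃ v, G.Adj a v ∧ G.degree v = 1 then Classical.choose h else a with hvd
  have hvdspec : ∀ a ∈ A, G.Adj a (vd a) ∧ G.degree (vd a) = 1 := by
    intro a ha
    have h := hA a ha
    have hv : vd a = Classical.choose h := by
      simp only [hvd]
      rw [dif_pos h]
    rw [hv]
    exact Classical.choose_spec h
  have hvdA : ∀ a ∈ A, vd a ∉ A := by
    intro a ha hmem
    obtain ⟨hadj, hdeg⟩ := hvdspec a ha
    obtain ⟨u, hu, hu1⟩ := hA _ hmem
    exact hedge _ _ hu hdeg hu1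
  -- the unique neighbour of `vd a` is `a`
  have huniq : ∀ a ∈ A, ∀ w, G.Adj (vd a) w → w = a := by
    intro a ha w hw
    obtain ⟨hadj, hdeg⟩ := hvdspec a ha
    have hcard : (G.neighborFinset (vd a)).card = 1 := by
      rwa [G.card_neighborFinset_eq_degree]
    obtain ⟨b, hb⟩ := Finset.card_eq_one.1 hcard
    have h1 : w ∈ G.neighborFinset (vd a) := by rwa [SimpleGraph.mem_neighborFinset]
    have h2 : a ∈ G.neighborFinset (vd a) := by
      rw [SimpleGraph.mem_neighborFinset]; exact hadj.symm
    rw [hb, mem_singleton] at h1 h2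
    rw [h1, h2]
  have hane : ∀ a ∈ A, a ≠ vd a := fun a ha => (hvdspec a ha).1.ne
  -- the two neighbourhood-preservation lemmas
  have hNins : ∀ (J : Finset V) (a : V), a ∈ A → a ∈ J →
      closedNbhd G (insert (vd a) J) = closedNbhd G J := by
    intro J a ha haJ
    ext u
    simp only [closedNbhd, mem_filter, mem_univ, true_and, mem_insert]
    constructor
    · rintro ((rfl | huJ) | ⟨j, (rfl | hjJ), hadj⟩)
      · exact Or.inr ⟨a, haJ, (hvdspec a ha).1⟩
      · exact Or.inl huJ
      · have := huniq a ha u hadj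
        subst this
        exact Or.inl haJ
      · exact Or.inr ⟨j, hjJ, hadj⟩
    · rintro (huJ | ⟨j, hjJ, hadj⟩)
      · exact Or.inl (Or.inr huJ)
      · exact Or.inr ⟨j, Or.inr hjJ, hadj⟩
  have hNer : ∀ (J : Finset V) (a : V), a ∈ A → a ∈ J →
      closedNbhd G (J.erase (vd a)) = closedNbhd G J := by
    intro J a ha haJ
    have haE : a ∈ J.erase (vd a) := mem_erase.2 ⟨hane a ha, haJ⟩
    ext u
    simp only [closedNbhd, mem_filter, mem_univ, true_and]
    constructor
    · rintro (huJ | ⟨j, hjJ, hadj⟩)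
      · exact Or.inl (mem_of_mem_erase huJ)
      · exact Or.inr ⟨j, mem_of_mem_erase hjJ, hadj⟩
    · rintro (huJ | ⟨j, hjJ, hadj⟩)
      · by_cases hu : u = vd a
        · subst hu
          exact Or.inr ⟨a, haE, (hvdspec a ha).1⟩
        · exact Or.inl (mem_erase.2 ⟨hu, huJ⟩)
      · by_cases hj : j = vd a
        · subst hj
          have := huniq a ha u hadj
          subst this
          exact Or.inl haE
        · exact Or.inr ⟨j, mem_erase.2 ⟨hj, hjJ⟩, hadj⟩
  -- the involution
  set g : Finset V → Finset V := fun J =>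
    if h : (J ∩ A).Nonempty then
      (if vd ((J ∩ A).min' h) ∈ J then J.erase (vd ((J ∩ A).min' h))
        else insert (vd ((J ∩ A).min' h)) J)
    else J with hg
  have geval : ∀ (K : Finset V) (h : (K ∩ A).Nonempty),
      g K = if vd ((K ∩ A).min' h) ∈ K then K.erase (vd ((K ∩ A).min' h))
        else insert (vd ((K ∩ A).min' h)) K := by
    intro K h
    simp only [hg]
    rw [dif_pos h]
  have hmain : ∀ (J : Finset V) (hne0 : (J ∩ A).Nonempty),
      (g J ∩ A = J ∩ A) ∧ (f J + f (g J) = 0) ∧ g J ≠ J := by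
    intro J hne0
    have hgJ := geval J hne0
    set a := (J ∩ A).min' hne0 with ha_def
    have haJA : a ∈ J ∩ A := by rw [ha_def]; exact Finset.min'_mem _ _
    have ha : a ∈ A := (mem_inter.1 haJA).2
    have haJ : a ∈ J := (mem_inter.1 haJA).1
    have hvA : vd a ∉ A := hvdA a ha
    by_cases hvJ : vd a ∈ J
    · rw [if_pos hvJ] at hgJ
      refine ⟨?_, ?_, ?_⟩
      · rw [hgJ]
        ext x
        simp only [mem_inter, mem_erase]
        constructor
        · rintro ⟨⟨_, hxJ⟩, hxA⟩; exact ⟨hxJ, hxA⟩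
        · rintro ⟨hxJ, hxA⟩
          exact ⟨⟨fun hxv => hvA (hxv ▸ hxA), hxJ⟩, hxA⟩
      · simp only [hf]
        rw [hgJ, hNer J a ha haJ, ← Finset.card_erase_add_one hvJ, pow_succ]
        ring
      · rw [hgJ]
        intro hEq
        exact (Finset.notMem_erase (vd a) J) (hEq.symm ▸ hvJ)
    · rw [if_neg hvJ] at hgJ
      refine ⟨?_, ?_, ?_⟩
      · rw [hgJ]
        ext x
        simp only [mem_inter, mem_insert]
        constructor
        · rintro ⟨(rfl | hxJ), hxA⟩
          · exact absurd hxA hvA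
          · exact ⟨hxJ, hxA⟩
        · rintro ⟨hxJ, hxA⟩; exact ⟨Or.inr hxJ, hxA⟩
      · simp only [hf]
        rw [hgJ, hNins J a ha haJ, Finset.card_insert_of_notMem hvJ, pow_succ]
        ring
      · rw [hgJ]
        intro hEq
        exact hvJ (hEq ▸ mem_insert_self (vd a) J)
  have hne : ∀ J ∈ (Finset.univ : Finset V).powerset.filter (fun J => ¬ J ⊆ Aᶜ),
      (J ∩ A).Nonempty := by
    intro J hJ
    rw [mem_filter] at hJ
    obtain ⟨x, hxJ, hxA⟩ := not_subset.1 hJ.2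
    exact ⟨x, mem_inter.2 ⟨hxJ, by simpa using hxA⟩⟩
  have hzero : ∑ J ∈ (Finset.univ : Finset V).powerset.filter (fun J => ¬ J ⊆ Aᶜ), f J = 0 := by
    refine Finset.sum_involution (fun J _ => g J)
      (fun J hJ => (hmain J (hne J hJ)).2.1)
      (fun J hJ _ => (hmain J (hne J hJ)).2.2)
      (fun J hJ => ?_)
      (fun J hJ => ?_)
    · -- g_mem
      rw [mem_filter]
      refine ⟨mem_powerset.2 (subset_univ _), ?_⟩
      intro hsub
      have hEq := (hmain J (hne J hJ)).1
      have hne' : (g J ∩ A).Nonempty := by rw [hEq]; exact hne J hJ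
      obtain ⟨x, hx⟩ := hne'
      have hx1 := mem_inter.1 hx
      exact (mem_compl.1 (hsub hx1.1)) hx1.2
    · -- g_inv
      show g (g J) = J
      have hne0 := hne J hJ
      have hEq := (hmain J hne0).1
      have hne' : (g J ∩ A).Nonempty := by rw [hEq]; exact hne0
      have hgg := geval (g J) hne'
      have hmin : (g J ∩ A).min' hne' = (J ∩ A).min' hne0 := by
        congr 1
      rw [hmin] at hgg
      have hgJ := geval J hne0
      set a := (J ∩ A).min' hne0 with ha_def
      by_cases hvJ : vd a ∈ J
      · rw [if_pos hvJ] at hgJ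
        rw [hgJ] at hgg ⊢
        rw [if_neg (Finset.notMem_erase (vd a) J)] at hgg
        rw [hgg, Finset.insert_erase hvJ]
      · rw [if_neg hvJ] at hgJ
        rw [hgJ] at hgg ⊢
        rw [if_pos (mem_insert_self (vd a) J)] at hgg
        rw [hgg, Finset.erase_insert hvJ]
  rw [drel_eq_sum_univ G p]
  have habs : ∑ J ∈ (Finset.univ : Finset V).powerset,
      (-1 : ℝ) ^ J.card * ∏ v ∈ closedNbhd G J, (1 - p v)
      = ∑ J ∈ (Finset.univ : Finset V).powerset, f J := by
    simp only [hf]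
  have hsum := Finset.sum_filter_add_sum_filter_not
    ((Finset.univ : Finset V).powerset) (fun J => J ⊆ Aᶜ) f
  have hPA : (Finset.univ : Finset V).powerset.filter (fun J => J ⊆ Aᶜ) = Aᶜ.powerset := by
    ext J
    simp [Finset.mem_powerset, Finset.mem_filter, Finset.subset_univ]
  rw [habs, ← hsum, hzero, add_zero, hPA]
  exact Finset.sum_congr (by congr!) fun _ _ => rfl
end

section
/- For the complete bipartite graph K_{s,t} with all vertices operating independently with probability p and q = 1 - p, DRel(K_{s,t}, p) = (1 - q^s)(1 - q^t) + q^s · p^t + q^t · p^s. -/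
open scoped Classical
open Finset

section aux

variable {s t : ℕ}

/-- combine a pair of finsets into a finset of the sum type -/
noncomputable def pairE (s t : ℕ) : Finset (Fin s) × Finset (Fin t) ≃ Finset (Fin s ⊕ Fin t) where
  toFun AB := AB.1.map ⟨Sum.inl, Sum.inl_injective⟩ ∪ AB.2.map ⟨Sum.inr, Sum.inr_injective⟩
  invFun X := (X.preimage Sum.inl Sum.inl_injective.injOn,
               X.preimage Sum.inr Sum.inr_injective.injOn)
  left_inv := by
    rintro ⟨A, B⟩
    ext x <;> simp
  right_inv := by
    intro X
    ext (a | b) <;> simp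

lemma mem_pairE_inl (A : Finset (Fin s)) (B : Finset (Fin t)) (a : Fin s) :
    Sum.inl a ∈ pairE s t (A, B) ↔ a ∈ A := by simp [pairE]

lemma mem_pairE_inr (A : Finset (Fin s)) (B : Finset (Fin t)) (b : Fin t) :
    Sum.inr b ∈ pairE s t (A, B) ↔ b ∈ B := by simp [pairE]

lemma card_pairE (A : Finset (Fin s)) (B : Finset (Fin t)) :
    (pairE s t (A, B)).card = A.card + B.card := by
  classical
  rw [pairE]
  simp only [Equiv.coe_fn_mk]
  rw [Finset.card_union_of_disjoint, Finset.card_map, Finset.card_map]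
  simp [Finset.disjoint_left]

lemma isDom_pairE (hs : 1 ≤ s) (ht : 1 ≤ t) (A : Finset (Fin s)) (B : Finset (Fin t)) :
    IsDominating (completeBipartiteGraph (Fin s) (Fin t)) (pairE s t (A, B)) ↔
      (A.Nonempty ∧ B.Nonempty) ∨ (A = univ ∧ B = ∅) ∨ (A = ∅ ∧ B = univ) := by
  have hsne : (univ : Finset (Fin s)).Nonempty := univ_nonempty_iff.mpr ⟨⟨0, hs⟩⟩
  have htne : (univ : Finset (Fin t)).Nonempty := univ_nonempty_iff.mpr ⟨⟨0, ht⟩⟩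
  constructor
  · intro h
    rcases A.eq_empty_or_nonempty with hA | hA
    · right; right
      refine ⟨hA, ?_⟩
      ext b
      simp only [mem_univ, iff_true]
      rcases h (Sum.inr b) with hb | ⟨x, hx, hadj⟩
      · rwa [mem_pairE_inr] at hb
      · exfalso
        rcases x with a | b'
        · rw [mem_pairE_inl] at hx; simp [hA] at hx
        · simp [completeBipartiteGraph] at hadj
    · rcases B.eq_empty_or_nonempty with hB | hB
      · right; left
        refine ⟨?_, hB⟩
        ext a
        simp only [mem_univ, iff_true]
        rcases h (Sum.inl a) with ha | ⟨x, hx, hadj⟩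
        · rwa [mem_pairE_inl] at ha
        · exfalso
          rcases x with a' | b
          · simp [completeBipartiteGraph] at hadj
          · rw [mem_pairE_inr] at hx; simp [hB] at hx
      · exact Or.inl ⟨hA, hB⟩
  · intro h v
    rcases v with a | b
    · rcases h with ⟨hA, ⟨b, hb⟩⟩ | ⟨hA, hB⟩ | ⟨hA, hB⟩
      · exact Or.inr ⟨Sum.inr b, (mem_pairE_inr A B b).mpr hb, by simp [completeBipartiteGraph]⟩
      · exact Or.inl ((mem_pairE_inl A B a).mpr (hA ▸ mem_univ a))
      · obtain ⟨b, hb⟩ := htne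
        exact Or.inr ⟨Sum.inr b, (mem_pairE_inr A B b).mpr (hB ▸ mem_univ b),
          by simp [completeBipartiteGraph]⟩
    · rcases h with ⟨⟨a, ha⟩, hB⟩ | ⟨hA, hB⟩ | ⟨hA, hB⟩
      · exact Or.inr ⟨Sum.inl a, (mem_pairE_inl A B a).mpr ha, by simp [completeBipartiteGraph]⟩
      · obtain ⟨a, ha⟩ := hsne
        exact Or.inr ⟨Sum.inl a, (mem_pairE_inl A B a).mpr (hA ▸ mem_univ a),
          by simp [completeBipartiteGraph]⟩
      · exact Or.inl ((mem_pairE_inr A B b).mpr (hB ▸ mem_univ b))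

lemma sum_weights (n : ℕ) (p q : ℝ) :
    ∑ A : Finset (Fin n), p ^ A.card * q ^ (n - A.card) = (p + q) ^ n := by
  classical
  have h := Finset.prod_add (fun _ : Fin n => p) (fun _ : Fin n => q) Finset.univ
  simp only [Finset.prod_const, Finset.powerset_univ] at h
  rw [Finset.card_univ, Fintype.card_fin] at h
  rw [h]
  apply Finset.sum_congr rfl
  intro A _
  congr 2
  rw [← Finset.compl_eq_univ_sdiff, Finset.card_compl, Fintype.card_fin]

end aux


theorem drel_complete_bipartite (s t : ℕ) (hs : 1 ≤ s) (ht : 1 ≤ t) (p : ℝ)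
    (hp : p ∈ Set.Icc (0 : ℝ) 1) :
    DRel (completeBipartiteGraph (Fin s) (Fin t)) (fun _ => p) =
      (1 - (1 - p) ^ s) * (1 - (1 - p) ^ t)
        + (1 - p) ^ s * p ^ t + (1 - p) ^ t * p ^ s := by
  classical
  set q : ℝ := 1 - p with hq
  have hpq : p + q = 1 := by rw [hq]; ring
  set wa : Finset (Fin s) → ℝ := fun A => p ^ A.card * q ^ (s - A.card) with hwa
  set wb : Finset (Fin t) → ℝ := fun B => p ^ B.card * q ^ (t - B.card) with hwb
  have hsne : (univ : Finset (Fin s)).Nonempty := univ_nonempty_iff.mpr ⟨⟨0, hs⟩⟩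
  have htne : (univ : Finset (Fin t)).Nonempty := univ_nonempty_iff.mpr ⟨⟨0, ht⟩⟩
  have hW : ∀ (A : Finset (Fin s)) (B : Finset (Fin t)),
      p ^ (pairE s t (A, B)).card * q ^ (s + t - (pairE s t (A, B)).card) = wa A * wb B := by
    intro A B
    rw [card_pairE]
    have hA : A.card ≤ s := by simpa using A.card_le_univ
    have hB : B.card ≤ t := by simpa using B.card_le_univ
    have : s + t - (A.card + B.card) = (s - A.card) + (t - B.card) := by omega
    rw [this, pow_add, pow_add, hwa, hwb]
    ring
  have key : ∀ (A : Finset (Fin s)) (B : Finset (Fin t)),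
      (if IsDominating (completeBipartiteGraph (Fin s) (Fin t)) (pairE s t (A, B)) then
          p ^ (pairE s t (A, B)).card * q ^ (s + t - (pairE s t (A, B)).card) else 0) =
        (if A.Nonempty then wa A else 0) * (if B.Nonempty then wb B else 0)
          + (if univ = A then wa A else 0) * (if (∅ : Finset (Fin t)) = B then wb B else 0)
          + (if (∅ : Finset (Fin s)) = A then wa A else 0) *
              (if univ = B then wb B else 0) := by
    intro A B
    rw [hW]
    rcases A.eq_empty_or_nonempty with hA | hA <;>
      rcases B.eq_empty_or_nonempty with hB | hB
    · subst hA; subst hB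
      have hnd : ¬ IsDominating (completeBipartiteGraph (Fin s) (Fin t))
          (pairE s t ((∅ : Finset (Fin s)), (∅ : Finset (Fin t)))) := by
        rw [isDom_pairE hs ht]
        rintro (⟨h, -⟩ | ⟨h, -⟩ | ⟨-, h⟩)
        · exact Finset.not_nonempty_empty h
        · exact hsne.ne_empty h.symm
        · exact htne.ne_empty h.symm
      simp [hnd, Finset.not_nonempty_empty, hsne.ne_empty, htne.ne_empty]
    · subst hA
      have hiff : IsDominating (completeBipartiteGraph (Fin s) (Fin t))
          (pairE s t ((∅ : Finset (Fin s)), B)) ↔ B = univ := by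
        rw [isDom_pairE hs ht]
        constructor
        · rintro (⟨h, -⟩ | ⟨h, -⟩ | ⟨-, h⟩)
          · exact absurd h Finset.not_nonempty_empty
          · exact absurd h.symm hsne.ne_empty
          · exact h
        · intro h; exact Or.inr (Or.inr ⟨rfl, h⟩)
      by_cases hB2 : B = univ
      · subst hB2
        simp [hiff, Finset.not_nonempty_empty, hsne.ne_empty, htne.ne_empty.symm]
      · simp [hiff, hB2, Finset.not_nonempty_empty, hsne.ne_empty, Ne.symm hB2,
          hB.ne_empty.symm]
    · subst hB
      have hiff : IsDominating (completeBipartiteGraph (Fin s) (Fin t))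
          (pairE s t (A, (∅ : Finset (Fin t)))) ↔ A = univ := by
        rw [isDom_pairE hs ht]
        constructor
        · rintro (⟨-, h⟩ | ⟨h, -⟩ | ⟨-, h⟩)
          · exact absurd h Finset.not_nonempty_empty
          · exact h
          · exact absurd h.symm htne.ne_empty
        · intro h; exact Or.inr (Or.inl ⟨h, rfl⟩)
      by_cases hA2 : A = univ
      · subst hA2
        simp [hiff, Finset.not_nonempty_empty, htne.ne_empty, hsne.ne_empty.symm]
      · simp [hiff, hA2, Finset.not_nonempty_empty, htne.ne_empty, Ne.symm hA2,
          hA.ne_empty.symm]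
    · have hd : IsDominating (completeBipartiteGraph (Fin s) (Fin t)) (pairE s t (A, B)) := by
        rw [isDom_pairE hs ht]; exact Or.inl ⟨hA, hB⟩
      simp [hd, hA, hB, hA.ne_empty.symm, hB.ne_empty.symm]
  have hsumA : ∑ A : Finset (Fin s), (if A.Nonempty then wa A else 0) = 1 - q ^ s := by
    have h1 : ∀ A : Finset (Fin s), (if A.Nonempty then wa A else 0)
        = wa A - (if (∅ : Finset (Fin s)) = A then wa A else 0) := by
      intro A
      rcases A.eq_empty_or_nonempty with h | h
      · simp [h, Finset.not_nonempty_empty]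
      · simp [h, h.ne_empty.symm]
    rw [Finset.sum_congr rfl (fun A _ => h1 A), Finset.sum_sub_distrib,
      Finset.sum_ite_eq univ (∅ : Finset (Fin s)) wa, sum_weights, hpq]
    simp [hwa]
  have hsumB : ∑ B : Finset (Fin t), (if B.Nonempty then wb B else 0) = 1 - q ^ t := by
    have h1 : ∀ B : Finset (Fin t), (if B.Nonempty then wb B else 0)
        = wb B - (if (∅ : Finset (Fin t)) = B then wb B else 0) := by
      intro B
      rcases B.eq_empty_or_nonempty with h | h
      · simp [h, Finset.not_nonempty_empty]
      · simp [h, h.ne_empty.symm]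
    rw [Finset.sum_congr rfl (fun B _ => h1 B), Finset.sum_sub_distrib,
      Finset.sum_ite_eq univ (∅ : Finset (Fin t)) wb, sum_weights, hpq]
    simp [hwb]
  unfold DRel
  rw [Finset.sum_filter]
  simp only [Finset.prod_const, Finset.card_compl, Fintype.card_sum, Fintype.card_fin]
  rw [← Equiv.sum_comp (pairE s t), Fintype.sum_prod_type]
  refine Eq.trans (Finset.sum_congr rfl fun A _ => Finset.sum_congr rfl fun B _ => key A B) ?_
  calc ∑ A : Finset (Fin s), ∑ B : Finset (Fin t),
          ((if A.Nonempty then wa A else 0) * (if B.Nonempty then wb B else 0)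
          + (if univ = A then wa A else 0) * (if (∅ : Finset (Fin t)) = B then wb B else 0)
          + (if (∅ : Finset (Fin s)) = A then wa A else 0) *
              (if univ = B then wb B else 0))
      = (∑ A : Finset (Fin s), (if A.Nonempty then wa A else 0)) *
          (∑ B : Finset (Fin t), (if B.Nonempty then wb B else 0))
        + (∑ A : Finset (Fin s), (if univ = A then wa A else 0)) *
          (∑ B : Finset (Fin t), (if (∅ : Finset (Fin t)) = B then wb B else 0))
        + (∑ A : Finset (Fin s), (if (∅ : Finset (Fin s)) = A then wa A else 0)) *
          (∑ B : Finset (Fin t), (if univ = B then wb B else 0)) := by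
        simp only [Finset.sum_add_distrib, Finset.sum_mul_sum]
    _ = (1 - q ^ s) * (1 - q ^ t) + wa univ * wb ∅ + wa ∅ * wb univ := by
        rw [hsumA, hsumB, Finset.sum_ite_eq univ (univ : Finset (Fin s)) wa,
          Finset.sum_ite_eq univ (∅ : Finset (Fin t)) wb,
          Finset.sum_ite_eq univ (∅ : Finset (Fin s)) wa,
          Finset.sum_ite_eq univ (univ : Finset (Fin t)) wb]
        simp
    _ = (1 - q ^ s) * (1 - q ^ t) + q ^ s * p ^ t + q ^ t * p ^ s := by
        simp only [hwa, hwb, Finset.card_univ, Fintype.card_fin, Finset.card_empty,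
          Nat.sub_self, Nat.sub_zero, pow_zero, mul_one, one_mul]
        ring
end

section
/- For the path P_n on n vertices (n ≥ 3) with common vertex operation probability p and q = 1 - p, the domination reliability satisfies the recurrence DRel(P_n, p) = p^{n-2} + p·q·DRel(P_{n-2}, p) + q·Σ_{k=3}^{n-1} p^{k-2}·DRel(P_{n-k}, p), with DRel(P_1, p) = p and DRel(P_2, p) = 2p - p^2. -/
open scoped Classical
open Finset

/-!
Put the path on `0, 1, …, N - 1`, and let `D N m = domProb p N m` be the probability that the
operating vertices among the first `N` dominate the first `m`.  Conditioning on vertex `N` gives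
`D (N+1) m = p D N (N-1) + q D N m` whenever `N - 1 ≤ m ≤ N + 2`, since an operating vertex `N`
dominates `N - 1, N, N + 1`; moreover `D N (N+2) = 0`.  For `F N = D N N` and `G N = D (N+1) N`
this yields `F (N+2) = p G (N-1) + p q F N` for `N ≥ 1` and `G (N+1) = p G N + q F (N+1)`,
and unrolling the second recurrence gives the stated formula.
-/

namespace PathDomination

def DominatesPrefix (X : Finset ℕ) (m : ℕ) : Prop :=
  ∀ i < m, ∃ j ∈ X, i ≤ j + 1 ∧ j ≤ i + 1

def weight (p : ℝ) (N : ℕ) (X : Finset ℕ) : ℝ :=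
  ∏ i ∈ range N, if i ∈ X then p else 1 - p

noncomputable def domProb (p : ℝ) (N m : ℕ) : ℝ :=
  ∑ X ∈ (range N).powerset, if DominatesPrefix X m then weight p N X else 0

lemma dominatesPrefix_insert_iff {X : Finset ℕ} {N m : ℕ} (h₁ : N - 1 ≤ m) (h₂ : m ≤ N + 2) :
    DominatesPrefix (insert N X) m ↔ DominatesPrefix X (N - 1) := by
  constructor
  · intro h i hi
    obtain ⟨j, hj, hij⟩ := h i (by omega)
    refine ⟨j, (mem_insert.1 hj).resolve_left ?_, hij⟩
    omega
  · intro h i hi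
    by_cases hiN : i < N - 1
    · obtain ⟨j, hj, hij⟩ := h i hiN
      exact ⟨j, mem_insert_of_mem hj, hij⟩
    · exact ⟨N, mem_insert_self N X, by omega, by omega⟩

lemma not_dominatesPrefix_add_two {X : Finset ℕ} {N : ℕ} (hX : X ⊆ range N) :
    ¬ DominatesPrefix X (N + 2) := by
  intro h
  obtain ⟨j, hj, hj'⟩ := h (N + 1) (by omega)
  have := mem_range.1 (hX hj)
  omega

variable {p : ℝ}

lemma weight_succ {N : ℕ} {X : Finset ℕ} (hN : N ∉ X) :
    weight p (N + 1) X = (1 - p) * weight p N X := by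
  rw [weight, prod_range_succ, if_neg hN, weight, mul_comm]

lemma weight_succ_insert (N : ℕ) (X : Finset ℕ) :
    weight p (N + 1) (insert N X) = p * weight p N X := by
  rw [weight, prod_range_succ, if_pos (mem_insert_self N X), weight, mul_comm]
  congr 1
  refine prod_congr rfl fun i hi => ?_
  simp [(mem_range.1 hi).ne]

lemma domProb_succ {N m : ℕ} (h₁ : N - 1 ≤ m) (h₂ : m ≤ N + 2) :
    domProb p (N + 1) m = p * domProb p N (N - 1) + (1 - p) * domProb p N m := by
  rw [domProb, range_add_one, sum_powerset_insert notMem_range_self, add_comm,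
    domProb, domProb, mul_sum, mul_sum]
  congr 1 <;> refine sum_congr rfl fun X hX => ?_
  · rw [dominatesPrefix_insert_iff h₁ h₂, weight_succ_insert, mul_ite, mul_zero]
  · have hN : N ∉ X := fun h => (mem_range.1 (mem_powerset.1 hX h)).false
    rw [weight_succ hN, mul_ite, mul_zero]

lemma domProb_self_add_two (N : ℕ) : domProb p N (N + 2) = 0 :=
  sum_eq_zero fun _ hX => if_neg (not_dominatesPrefix_add_two (mem_powerset.1 hX))

lemma domProb_zero_zero : domProb p 0 0 = 1 := by
  simp [domProb, DominatesPrefix, weight]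

lemma domProb_zero_one : domProb p 0 1 = 0 := by
  simp [domProb, DominatesPrefix]

lemma domProb_add_two (N : ℕ) :
    domProb p (N + 2) (N + 2) = p * domProb p N (N - 1) + p * (1 - p) * domProb p N N := by
  rw [domProb_succ (by omega) (by omega), domProb_succ (N := N) (by omega) (by omega),
    domProb_succ (N := N) (by omega) (by omega), domProb_self_add_two,
    show N + 1 - 1 = N from rfl]
  ring

lemma domProb_succ_self (N : ℕ) :
    domProb p (N + 1) N =
      p ^ N + (1 - p) * ∑ i ∈ range N, p ^ i * domProb p (N - i) (N - i) := by
  induction N with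
  | zero => simp [domProb_succ, domProb_zero_zero]
  | succ N ih =>
    rw [domProb_succ (by omega) (by omega), show N + 1 - 1 = N from rfl, ih, sum_range_succ']
    simp only [Nat.add_sub_add_right, Nat.sub_zero, pow_succ', mul_assoc, ← mul_sum]
    ring

lemma sum_powerset_range_eq_sum_finset_fin {M : Type*} [AddCommMonoid M] (n : ℕ)
    (f : Finset ℕ → M) :
    ∑ Y ∈ (range n).powerset, f Y = ∑ X : Finset (Fin n), f (X.map Fin.valEmbedding) := by
  have hrange : (univ : Finset (Fin n)).map Fin.valEmbedding = range n := by
    rw [Fin.map_valEmbedding_univ, Nat.Iio_eq_range]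
  symm
  refine sum_bij (fun X _ => X.map Fin.valEmbedding) (fun X _ => ?_)
    (fun _ _ _ _ h => map_injective _ h) (fun Y hY => ?_) (fun _ _ => rfl)
  · exact mem_powerset.2 (hrange ▸ map_subset_map.2 (subset_univ X))
  · obtain ⟨X, -, rfl⟩ := subset_map_iff.1 (hrange ▸ mem_powerset.1 hY)
    exact ⟨X, mem_univ X, rfl⟩

lemma isDominating_pathGraph_iff {n : ℕ} (X : Finset (Fin n)) :
    IsDominating (SimpleGraph.pathGraph n) X ↔ DominatesPrefix (X.map Fin.valEmbedding) n := by
  have hnbhd : ∀ v : Fin n, (v ∈ X ∨ ∃ x ∈ X, (SimpleGraph.pathGraph n).Adj x v) ↔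
      ∃ x ∈ X, (v : ℕ) ≤ x + 1 ∧ (x : ℕ) ≤ v + 1 := by
    intro v
    simp only [SimpleGraph.pathGraph_adj]
    constructor
    · rintro (hv | ⟨x, hx, hxv⟩)
      · exact ⟨v, hv, by omega, by omega⟩
      · exact ⟨x, hx, by omega, by omega⟩
    · rintro ⟨x, hx, hxv⟩
      obtain rfl | hne := eq_or_ne x v
      · exact Or.inl hx
      · exact Or.inr ⟨x, hx, by rw [Ne, Fin.ext_iff] at hne; omega⟩
  simp only [IsDominating, hnbhd, DominatesPrefix, Fin.forall_iff, mem_map,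
    Fin.valEmbedding_apply, exists_exists_and_eq_and]

lemma weight_map_valEmbedding {n : ℕ} (X : Finset (Fin n)) :
    weight p n (X.map Fin.valEmbedding) = (∏ _v ∈ X, p) * ∏ _v ∈ Xᶜ, (1 - p) := by
  rw [weight, ← Fin.prod_univ_eq_prod_range
    (fun i => if i ∈ X.map Fin.valEmbedding then p else 1 - p), prod_ite]
  simp [Fin.val_inj, compl_eq_univ_sdiff, filter_not]

lemma DRel_pathGraph (n : ℕ) : DRel (SimpleGraph.pathGraph n) (fun _ => p) = domProb p n n := by
  rw [DRel, domProb, sum_powerset_range_eq_sum_finset_fin, sum_filter]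
  exact sum_congr rfl fun X _ =>
    if_congr (isDominating_pathGraph_iff X) (by convert (weight_map_valEmbedding X).symm) rfl

end PathDomination

open PathDomination in
theorem drel_path_recurrence_general (n : ℕ) (hn : 3 ≤ n) (p : ℝ) :
    (DRel (SimpleGraph.pathGraph 1) (fun _ => p) = p ∧
      DRel (SimpleGraph.pathGraph 2) (fun _ => p) = 2 * p - p ^ 2) ∧
    DRel (SimpleGraph.pathGraph n) (fun _ => p) =
      p ^ (n - 2) + p * (1 - p) * DRel (SimpleGraph.pathGraph (n - 2)) (fun _ => p)
        + (1 - p) * ∑ k ∈ Finset.Icc 3 (n - 1),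
            p ^ (k - 2) * DRel (SimpleGraph.pathGraph (n - k)) (fun _ => p) := by
  simp only [DRel_pathGraph]
  refine ⟨⟨?_, ?_⟩, ?_⟩
  · simp [domProb_succ, domProb_zero_zero, domProb_zero_one]
  · rw [domProb_add_two, domProb_zero_zero]
    ring
  obtain ⟨N, rfl⟩ : ∃ N, n = N + 3 := ⟨n - 3, by omega⟩
  have hsum : ∑ k ∈ Icc 3 (N + 3 - 1), p ^ (k - 2) * domProb p (N + 3 - k) (N + 3 - k) =
      p * ∑ i ∈ range N, p ^ i * domProb p (N - i) (N - i) := by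
    rw [← Ico_add_one_right_eq_Icc, sum_Ico_eq_sum_range, mul_sum]
    refine sum_congr (congrArg range (by omega)) fun i _ => ?_
    rw [show 3 + i - 2 = i + 1 by omega, show N + 3 - (3 + i) = N - i by omega, pow_succ']
    ring
  rw [hsum, show N + 3 - 2 = N + 1 from rfl, domProb_add_two, show N + 1 - 1 = N from rfl,
    domProb_succ_self]
  ring

theorem drel_path_recurrence (n : ℕ) (hn : 3 ≤ n) (p : ℝ)
    (hp : p ∈ Set.Icc (0 : ℝ) 1) :
    (DRel (SimpleGraph.pathGraph 1) (fun _ => p) = p ∧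
      DRel (SimpleGraph.pathGraph 2) (fun _ => p) = 2 * p - p ^ 2) ∧
    DRel (SimpleGraph.pathGraph n) (fun _ => p) =
      p ^ (n - 2) + p * (1 - p) * DRel (SimpleGraph.pathGraph (n - 2)) (fun _ => p)
        + (1 - p) * ∑ k ∈ Finset.Icc 3 (n - 1),
            p ^ (k - 2) * DRel (SimpleGraph.pathGraph (n - k)) (fun _ => p) :=
  drel_path_recurrence_general n hn p
end

section
/- For any nonempty graph G = (V,E), the domination polynomial satisfies D_G(x) = Σ_{J ⊆ V} (-1)^{|J|} (x+1)^{|V| - |N_G[J]|}. -/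
open scoped Classical
open Finset

/-- The domination polynomial of `G`, evaluated at a real `x`. -/
noncomputable def domPoly {V : Type*} [Fintype V] (G : SimpleGraph V) (x : ℝ) : ℝ :=
  ∑ X ∈ Finset.univ.filter (fun X : Finset V => IsDominating G X), x ^ X.card

lemma sum_powerset_pow {α : Type*} (s : Finset α) (x : ℝ) :
    ∑ X ∈ s.powerset, x ^ X.card = (x + 1) ^ s.card := by
  classical
  rw [Finset.sum_powerset_apply_card (fun m => x ^ m), add_pow]
  simp [mul_comm]

lemma sum_neg_one_real {α : Type*} (s : Finset α) :
    ∑ J ∈ s.powerset, (-1 : ℝ) ^ J.card = if s = ∅ then 1 else 0 := by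
  classical
  have h := Finset.sum_powerset_neg_one_pow_card (x := s)
  apply_fun (Int.cast : ℤ → ℝ) at h
  push_cast at h
  simpa using h

lemma subset_compl_symm {V : Type*} [Fintype V] (G : SimpleGraph V) (X J : Finset V) :
    X ⊆ (closedNbhd G J)ᶜ ↔ J ⊆ (closedNbhd G X)ᶜ := by
  have h : ∀ (A B : Finset V), A ⊆ (closedNbhd G B)ᶜ ↔
      ∀ a ∈ A, ∀ b ∈ B, a ≠ b ∧ ¬ G.Adj a b := by
    intro A B
    simp only [Finset.subset_iff, Finset.mem_compl, closedNbhd, Finset.mem_filter,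
      Finset.mem_univ, true_and, not_or]
    push_neg
    constructor
    · intro h a ha b hb
      obtain ⟨h1, h2⟩ := h ha
      exact ⟨fun e => h1 (e ▸ hb), fun hadj => h2 b hb hadj.symm⟩
    · intro h a ha
      refine ⟨fun haB => (h a ha a haB).1 rfl, fun b hb hadj => (h a ha b hb).2 hadj.symm⟩
  rw [h, h]
  constructor <;> intro hh b hb a ha <;>
    exact ⟨fun e => (hh a ha b hb).1 e.symm, fun hadj => (hh a ha b hb).2 hadj.symm⟩

lemma dominating_iff {V : Type*} [Fintype V] (G : SimpleGraph V) (X : Finset V) :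
    (closedNbhd G X)ᶜ = ∅ ↔ IsDominating G X := by
  rw [Finset.compl_eq_empty_iff, Finset.eq_univ_iff_forall]
  simp [closedNbhd, IsDominating]

theorem domPoly_inclusion_exclusion {V : Type*} [Fintype V] [Nonempty V]
    (G : SimpleGraph V) (x : ℝ) :
    domPoly G x = ∑ J : Finset V,
      (-1 : ℝ) ^ J.card * (x + 1) ^ (Fintype.card V - (closedNbhd G J).card) := by
  classical
  have step1 : ∀ J : Finset V,
      (-1 : ℝ) ^ J.card * (x + 1) ^ (Fintype.card V - (closedNbhd G J).card)
      = ∑ X : Finset V, if X ⊆ (closedNbhd G J)ᶜ then (-1 : ℝ) ^ J.card * x ^ X.card else 0 := by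
    intro J
    rw [← Finset.card_compl, ← sum_powerset_pow, Finset.mul_sum]
    rw [show ((closedNbhd G J)ᶜ).powerset
        = Finset.univ.filter (fun X : Finset V => X ⊆ (closedNbhd G J)ᶜ) by
      ext Y; simp [Finset.mem_powerset]]
    rw [Finset.sum_filter]
  calc domPoly G x
      = ∑ X : Finset V, x ^ X.card * (if (closedNbhd G X)ᶜ = ∅ then 1 else 0) := by
        rw [domPoly, Finset.sum_filter]
        refine Finset.sum_congr rfl fun X _ => ?_
        by_cases h : IsDominating G X
        · rw [if_pos h, if_pos ((dominating_iff G X).2 h), mul_one]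
        · rw [if_neg h, if_neg (fun he => h ((dominating_iff G X).1 he)), mul_zero]
    _ = ∑ X : Finset V, x ^ X.card * ∑ J ∈ ((closedNbhd G X)ᶜ).powerset, (-1 : ℝ) ^ J.card := by
        refine Finset.sum_congr rfl fun X _ => ?_
        rw [sum_neg_one_real]
    _ = ∑ X : Finset V, ∑ J : Finset V,
          if X ⊆ (closedNbhd G J)ᶜ then (-1 : ℝ) ^ J.card * x ^ X.card else 0 := by
        refine Finset.sum_congr rfl fun X _ => ?_
        rw [Finset.mul_sum]
        rw [show ((closedNbhd G X)ᶜ).powerset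
            = Finset.univ.filter (fun J => X ⊆ (closedNbhd G J)ᶜ) by
          ext J; simp [Finset.mem_powerset, subset_compl_symm G X J]]
        rw [Finset.sum_filter]
        refine Finset.sum_congr rfl fun J _ => ?_
        by_cases h : X ⊆ (closedNbhd G J)ᶜ <;> simp [h, mul_comm]
    _ = ∑ J : Finset V, ∑ X : Finset V,
          if X ⊆ (closedNbhd G J)ᶜ then (-1 : ℝ) ^ J.card * x ^ X.card else 0 :=
        Finset.sum_comm
    _ = ∑ J : Finset V,
          (-1 : ℝ) ^ J.card * (x + 1) ^ (Fintype.card V - (closedNbhd G J).card) := by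
        exact Finset.sum_congr rfl fun J _ => (step1 J).symm
end

section
/- Let V be a nonempty linearly ordered finite set and 𝒳 a family of nonempty subsets of V such that max X < max V for every X ∈ 𝒳. Then the number of even-cardinality subsets of V that contain no member of 𝒳 as a subset equals the number of odd-cardinality such subsets. -/
open scoped Classical
open Finset

theorem even_odd_subsets_card_eq {V : Type*} [Fintype V] [LinearOrder V] [Nonempty V]
    (𝒳 : Set (Finset V))
    (h𝒳 : ∀ X ∈ 𝒳, X.Nonempty ∧
      ∀ x ∈ X, x < Finset.univ.max' Finset.univ_nonempty) :
    (Finset.univ.filter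
        (fun S : Finset V => Even S.card ∧ ∀ X ∈ 𝒳, ¬ X ⊆ S)).card =
    (Finset.univ.filter
        (fun S : Finset V => ¬ Even S.card ∧ ∀ X ∈ 𝒳, ¬ X ⊆ S)).card := by
  set m := Finset.univ.max' (Finset.univ_nonempty (α := V)) with hm
  have hmem : ∀ (S : Finset V) (x : V), x ≠ m → (x ∈ S ↔ x ∈ if m ∈ S then S.erase m else insert m S) := by
    intro S x hx
    split <;> simp [Finset.mem_erase, Finset.mem_insert, hx]
  have hsub : ∀ (S : Finset V), (∀ X ∈ 𝒳, ¬ X ⊆ S) ↔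
      (∀ X ∈ 𝒳, ¬ X ⊆ (if m ∈ S then S.erase m else insert m S)) := by
    intro S
    apply forall_congr'; intro X
    apply imp_congr_right; intro hX
    have hne : ∀ x ∈ X, x ≠ m := fun x hx => ne_of_lt ((h𝒳 X hX).2 x hx)
    constructor
    · intro h hsub'
      exact h (fun x hx => (hmem S x (hne x hx)).2 (hsub' hx))
    · intro h hsub'
      exact h (fun x hx => (hmem S x (hne x hx)).1 (hsub' hx))
  have hpar : ∀ (S : Finset V),
      Even (if m ∈ S then S.erase m else insert m S).card ↔ ¬ Even S.card := by
    intro S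
    by_cases h : m ∈ S <;> simp only [h, if_true, if_false]
    · rw [Finset.card_erase_of_mem h, Nat.even_sub (Finset.card_pos.2 ⟨m, h⟩)]
      simp
    · rw [Finset.card_insert_of_notMem h, Nat.even_add_one]
  have hinv : ∀ (S : Finset V),
      (if m ∈ (if m ∈ S then S.erase m else insert m S) then
        (if m ∈ S then S.erase m else insert m S).erase m
      else insert m (if m ∈ S then S.erase m else insert m S)) = S := by
    intro S
    by_cases h : m ∈ S <;> simp [h, Finset.insert_erase, Finset.erase_insert]
  apply Finset.card_bij' (fun S _ => if m ∈ S then S.erase m else insert m S)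
    (fun S _ => if m ∈ S then S.erase m else insert m S)
    ?_ ?_ ?_ ?_
  · intro S hS
    simp only [Finset.mem_filter, Finset.mem_univ, true_and] at hS ⊢
    exact ⟨fun h => ((hpar S).1 h) hS.1, (hsub S).1 hS.2⟩
  · intro S hS
    simp only [Finset.mem_filter, Finset.mem_univ, true_and] at hS ⊢
    exact ⟨(hpar S).2 hS.1, (hsub S).1 hS.2⟩
  · intro S _; exact hinv S
  · intro S _; exact hinv S
end
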